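/- With the structure functions f_{i,j}(z) and Δ(z), for all integers i, j ≥ 1 the identity f_{1,i}(z)·f_{1,j}(x^{i+j} z) = f_{1,i+j}(x^{j} z)·Δ(x^{i} z) holds as formal power series in z. -/

import Mathlib

/-!
Both sides are formal exponentials: `Δ(z)` is `exp` of
`log(1 - x^{2r-1}z) + log(1 - x^{1-2r}z) - log(1 - xz) - log(1 - x⁻¹z)`, and `expPS` turns sums
into products and commutes with `z ↦ cz`, so it suffices to compare exponents coefficientwise.
For `k ≥ 1` the factor `[min(1,k)m]_x = [m]_x` cancels, and with `q = x^m` the `m`-th exponent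
coefficient of `f_{1,k}` is `-(1/m)[(r-1)m]_x[rm]_x(x-x⁻¹)² · D(k)/D(0)` where
`D(k) = (q^{N+1-k} - q^{k-N-1}) - (q^{N-k} - q^{k-N})`
`    = q^{-k}(q^{N+1} - q^N) + q^k(q^{-N} - q^{-N-1})`.
The `m`-th coefficient of `log Δ` is exactly this prefactor, and the claim reduces to the identity
`D(i) + q^{i+j} D(j) = q^j D(i+j) + q^i D(0)`, visible from the second form of `D`.
-/

open PowerSeries

/-- `[s]_x = (x^s − x^{−s})/(x − x^{−1})` for real `s` (via complex powers). -/
noncomputable def qnum (x : ℂ) (s : ℝ) : ℂ := (x ^ (s : ℂ) - x ^ (-s : ℂ)) / (x - x⁻¹)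

/-- Formal exponential of a power series (its `n`-th coefficient is
`Σ_k (1/k!)·coeff_n(f^k)`; for `f` with zero constant term this is the usual
exponential `exp(f) = Σ_k f^k/k!`). -/
noncomputable def expPS (f : PowerSeries ℂ) : PowerSeries ℂ :=
  PowerSeries.mk fun n => ∑' k : ℕ, ((Nat.factorial k : ℂ))⁻¹ * (PowerSeries.coeff n) (f ^ k)

/-- The structure function
`f_{i,j}(z) = exp(−Σ_{m≥1} (1/m)[(r−1)m]_x[rm]_x(x−x^{−1})²·
  [min(i,j)m]_x([(N+1−max(i,j))m]_x − [(N−max(i,j))m]_x)/([m]_x([(N+1)m]_x−[Nm]_x))·z^m)`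
as a formal power series in `z`. -/
noncomputable def fps (x : ℂ) (r : ℝ) (N : ℕ) (i j : ℤ) : PowerSeries ℂ :=
  expPS (PowerSeries.mk fun m =>
    if m = 0 then 0 else
      -((1 / (m : ℂ)) * qnum x ((r - 1) * m) * qnum x (r * m) * (x - x⁻¹) ^ 2 *
        (qnum x ((min i j : ℤ) * m) *
            (qnum x (((N : ℤ) + 1 - max i j) * m) - qnum x (((N : ℤ) - max i j) * m)) /
          (qnum x (m : ℤ) * (qnum x (((N : ℤ) + 1) * m) - qnum x ((N : ℤ) * m))))))

/-- The formal power series expansion of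
`Δ(z) = (1 − x^{2r−1}z)(1 − x^{−2r+1}z)/((1 − xz)(1 − x^{−1}z))`. -/
noncomputable def Δps (x : ℂ) (r : ℝ) : PowerSeries ℂ :=
  (1 - PowerSeries.C (x ^ ((2 * r - 1 : ℝ) : ℂ)) * PowerSeries.X) *
    (1 - PowerSeries.C (x ^ ((-2 * r + 1 : ℝ) : ℂ)) * PowerSeries.X) *
    PowerSeries.mk (fun n => x ^ n) * PowerSeries.mk (fun n => x⁻¹ ^ n)

namespace PowerSeries

@[simp]
theorem constantCoeff_rescale {R : Type*} [CommSemiring R] (a : R) (f : R⟦X⟧) :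
    constantCoeff (rescale a f) = constantCoeff f := by
  rw [← coeff_zero_eq_constantCoeff_apply, coeff_rescale, pow_zero, one_mul,
    coeff_zero_eq_constantCoeff_apply]

theorem mk_pow_mul_one_sub_C_mul_X {R : Type*} [CommRing R] (c : R) :
    (mk (c ^ ·) : R⟦X⟧) * (1 - C c * X) = 1 := by
  simpa [rescale_mk, rescale_X] using congrArg (rescale c) (mk_one_mul_one_sub_eq_one (S := R))

end PowerSeries

section ExpPS

variable {f g : ℂ⟦X⟧}

theorem expPS_eq_subst (hf : constantCoeff f = 0) : expPS f = (exp ℂ).subst f := by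
  have hs : HasSubst f := HasSubst.of_constantCoeff_zero' hf
  ext n
  rw [coeff_subst' hs, expPS, coeff_mk,
    ← tsum_eq_finsum (L := SummationFilter.unconditional ℕ) (coeff_subst_finite' hs _ n)]
  simp [coeff_exp]

theorem constantCoeff_expPS (hf : constantCoeff f = 0) : constantCoeff (expPS f) = 1 := by
  rw [← coeff_zero_eq_constantCoeff_apply, expPS, coeff_mk, tsum_eq_single 0 fun k hk => ?_]
  · simp
  · simp [hf, hk]

theorem derivative_expPS (hf : constantCoeff f = 0) :
    d⁄dX ℂ (expPS f) = d⁄dX ℂ f * expPS f := by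
  rw [expPS_eq_subst hf, derivative_subst (HasSubst.of_constantCoeff_zero' hf), derivative_exp,
    mul_comm]

theorem eq_expPS_of_derivative_eq {F : ℂ⟦X⟧} (hg : constantCoeff g = 0)
    (hF₀ : constantCoeff F = 1) (hF : d⁄dX ℂ F = d⁄dX ℂ g * F) : F = expPS g := by
  set E := expPS g
  have hE₀ : constantCoeff E = 1 := constantCoeff_expPS hg
  have hEE : E⁻¹ * E = 1 := PowerSeries.inv_mul_cancel E (by simp [hE₀])
  have hFE : F * E⁻¹ = 1 := by
    refine derivative.ext ?_ (by simp [hF₀, hE₀])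
    rw [Derivation.leibniz, derivative_inv', derivative_expPS hg, hF, derivative_one, smul_eq_mul,
      smul_eq_mul]
    linear_combination (-(F * E⁻¹ * d⁄dX ℂ g)) * hEE
  calc F = F * E⁻¹ * E := by rw [mul_assoc, hEE, mul_one]
    _ = E := by rw [hFE, one_mul]

theorem expPS_zero : expPS 0 = 1 :=
  (eq_expPS_of_derivative_eq (by simp) (by simp) (by simp)).symm

theorem expPS_add (hf : constantCoeff f = 0) (hg : constantCoeff g = 0) :
    expPS (f + g) = expPS f * expPS g := by
  refine (eq_expPS_of_derivative_eq (by simp [hf, hg]) ?_ ?_).symm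
  · simp [constantCoeff_expPS, hf, hg]
  · rw [Derivation.leibniz, derivative_expPS hf, derivative_expPS hg, map_add, smul_eq_mul,
      smul_eq_mul]
    ring

theorem rescale_expPS (a : ℂ) (f : ℂ⟦X⟧) : rescale a (expPS f) = expPS (rescale a f) := by
  ext n
  simp only [coeff_rescale, expPS, coeff_mk, ← map_pow, ← tsum_mul_left]
  exact tsum_congr fun k => by ring

theorem expPS_log : expPS (log ℂ) = 1 + X := by
  refine (eq_expPS_of_derivative_eq constantCoeff_log (by simp) ?_).symm
  have h := mk_pow_mul_one_sub_C_mul_X (-1 : ℂ)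
  simp only [map_neg, map_one, neg_mul, one_mul, sub_neg_eq_add] at h
  simpa [deriv_log] using h.symm

theorem expPS_rescale_log (c : ℂ) : expPS (rescale (-c) (log ℂ)) = 1 - C c * X := by
  rw [← rescale_expPS, expPS_log, map_add, map_one, rescale_X, map_neg, neg_mul, ← sub_eq_add_neg]

theorem expPS_neg_rescale_log (c : ℂ) : expPS (-rescale (-c) (log ℂ)) = mk (c ^ ·) := by
  have h₀ : constantCoeff (1 - C c * X) ≠ 0 := by simp
  have hL : constantCoeff (rescale (-c) (log ℂ)) = 0 := by simp
  rw [(eq_inv_iff_mul_eq_one h₀).2 (mk_pow_mul_one_sub_C_mul_X c), eq_inv_iff_mul_eq_one h₀,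
    ← expPS_rescale_log, ← expPS_add (by simp [hL]) hL, neg_add_cancel, expPS_zero]

end ExpPS

section NormNeOne

variable {K : Type*} [NormedDivisionRing K] {q : K}

theorem norm_pow_ne_one (hq : ‖q‖ ≠ 1) {n : ℕ} (hn : n ≠ 0) : ‖q ^ n‖ ≠ 1 := by
  rwa [norm_pow, Ne, pow_eq_one_iff_of_nonneg (norm_nonneg q) hn]

theorem norm_zpow_ne_one (hq : ‖q‖ ≠ 1) {n : ℤ} (hn : n ≠ 0) : ‖q ^ n‖ ≠ 1 := by
  rwa [norm_zpow, Ne, zpow_eq_one_iff_right₀ (norm_nonneg q) hq]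

end NormNeOne

theorem sub_inv_ne_zero_of_norm_ne_one {K : Type*} [NormedField K] {q : K} (hq₀ : q ≠ 0)
    (hq : ‖q‖ ≠ 1) : q - q⁻¹ ≠ 0 := by
  have hq₂ : q ^ 2 ≠ 1 := fun h => norm_pow_ne_one hq two_ne_zero (by rw [h, norm_one])
  rw [show q - q⁻¹ = (q ^ 2 - 1) * q⁻¹ by field_simp]
  exact mul_ne_zero (sub_ne_zero.2 hq₂) (inv_ne_zero hq₀)

section FusionDiff

variable {K : Type*} [Field K]

/-- `(x - x⁻¹)([(n+1-k)m]_x - [(n-k)m]_x)`, written in `q = x^m`. -/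
def fusionDiff (q : K) (n k : ℤ) : K :=
  q ^ (n + 1 - k) - q ^ (-(n + 1 - k)) - (q ^ (n - k) - q ^ (-(n - k)))

theorem fusionDiff_add {q : K} (hq : q ≠ 0) (n i j : ℤ) :
    fusionDiff q n i + q ^ (i + j) * fusionDiff q n j =
      q ^ j * fusionDiff q n (i + j) + q ^ i * fusionDiff q n 0 := by
  simp only [fusionDiff, zpow_add₀ hq, zpow_sub₀ hq, zpow_neg, zpow_one, sub_zero, neg_sub,
    neg_add]
  field_simp
  ring

theorem fusionDiff_zero_mul_zpow {q : K} (hq : q ≠ 0) (n : ℤ) :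
    fusionDiff q n 0 * q ^ (n + 1) = (q - 1) * (q ^ (2 * n + 1) + 1) := by
  simp only [fusionDiff, zpow_add₀ hq, zpow_neg, sub_zero, zpow_mul', zpow_ofNat]
  field_simp
  ring

end FusionDiff

theorem fusionDiff_zero_ne_zero {K : Type*} [NormedField K] {q : K} (hq₀ : q ≠ 0) (hq : ‖q‖ ≠ 1)
    (n : ℤ) : fusionDiff q n 0 ≠ 0 := by
  intro h₀
  have h := fusionDiff_zero_mul_zpow hq₀ n
  rw [h₀, zero_mul, eq_comm, mul_eq_zero, sub_eq_zero, add_eq_zero_iff_eq_neg] at h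
  rcases h with h | h
  · exact hq (by rw [h, norm_one])
  · exact norm_zpow_ne_one hq (n := 2 * n + 1) (by omega) (by rw [h, norm_neg, norm_one])

theorem qnum_intCast_mul_natCast (x : ℂ) (k : ℤ) (m : ℕ) :
    qnum x (k * m) = ((x ^ m) ^ k - (x ^ m) ^ (-k)) / (x - x⁻¹) := by
  have h : (((k * m : ℝ)) : ℂ) = ((m * k : ℤ) : ℂ) := by push_cast; ring
  rw [qnum, h, ← Int.cast_neg, Complex.cpow_intCast, Complex.cpow_intCast, neg_mul_eq_mul_neg,
    zpow_mul, zpow_mul, zpow_natCast]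

noncomputable def fpsLog (x : ℂ) (r : ℝ) (N : ℕ) (i j : ℤ) : ℂ⟦X⟧ :=
  PowerSeries.mk fun m =>
    if m = 0 then 0 else
      -((1 / (m : ℂ)) * qnum x ((r - 1) * m) * qnum x (r * m) * (x - x⁻¹) ^ 2 *
        (qnum x ((min i j : ℤ) * m) *
            (qnum x (((N : ℤ) + 1 - max i j) * m) - qnum x (((N : ℤ) - max i j) * m)) /
          (qnum x (m : ℤ) * (qnum x (((N : ℤ) + 1) * m) - qnum x ((N : ℤ) * m)))))

theorem fps_eq_expPS_fpsLog (x : ℂ) (r : ℝ) (N : ℕ) (i j : ℤ) :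
    fps x r N i j = expPS (fpsLog x r N i j) := rfl

theorem constantCoeff_fpsLog (x : ℂ) (r : ℝ) (N : ℕ) (i j : ℤ) :
    constantCoeff (fpsLog x r N i j) = 0 := by
  simp [fpsLog, ← coeff_zero_eq_constantCoeff_apply]

theorem coeff_fpsLog_one {x : ℂ} (hx₀ : x ≠ 0) (hx : ‖x‖ ≠ 1) (r : ℝ) (N : ℕ) {k : ℤ}
    (hk : 1 ≤ k) {m : ℕ} (hm : m ≠ 0) :
    coeff m (fpsLog x r N 1 k) =
      -(1 / (m : ℂ) * qnum x ((r - 1) * m) * qnum x (r * m) * (x - x⁻¹) ^ 2) *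
        (fusionDiff (x ^ m) N k / fusionDiff (x ^ m) N 0) := by
  have hq₀ : x ^ m ≠ 0 := pow_ne_zero m hx₀
  have hq : ‖x ^ m‖ ≠ 1 := norm_pow_ne_one hx hm
  have hc := sub_inv_ne_zero_of_norm_ne_one hx₀ hx
  have hq₁ : (x ^ m) ^ (1 : ℤ) - (x ^ m) ^ (-1 : ℤ) ≠ 0 := by
    simpa using sub_inv_ne_zero_of_norm_ne_one hq₀ hq
  simp only [fpsLog, coeff_mk, if_neg hm, min_eq_left hk, max_eq_right hk]
  rw [show ((N : ℤ) : ℝ) + 1 - k = ((N + 1 - k : ℤ) : ℝ) by push_cast; ring,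
    show ((N : ℤ) : ℝ) - k = ((N - k : ℤ) : ℝ) by push_cast; ring,
    show ((N : ℤ) : ℝ) + 1 = ((N + 1 : ℤ) : ℝ) by push_cast; ring,
    show ((m : ℤ) : ℝ) = ((1 : ℤ) : ℝ) * m by push_cast; ring]
  simp only [qnum_intCast_mul_natCast]
  rw [neg_mul, div_sub_div_same, div_sub_div_same, mul_div_mul_left _ _ (div_ne_zero hq₁ hc),
    div_div_div_cancel_right₀ hc]
  simp only [fusionDiff, sub_zero]

theorem coeff_rescale_neg_log (c : ℂ) {m : ℕ} (hm : m ≠ 0) :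
    coeff m (rescale (-c) (log ℂ)) = -c ^ m / m := by
  have h : (-c) ^ m * (-1) ^ m = c ^ m := by rw [← mul_pow, neg_mul_neg, mul_one]
  rw [coeff_rescale, coeff_log, if_neg hm]
  push_cast
  linear_combination (-1 / (m : ℂ)) * h

/-- Mathlib's `log ℂ` is `log(1 + X)`, so `rescale (-c) (log ℂ)` is `log(1 - cX)`. -/
noncomputable def logΔps (x : ℂ) (r : ℝ) : ℂ⟦X⟧ :=
  rescale (-x ^ ((2 * r - 1 : ℝ) : ℂ)) (log ℂ) + rescale (-x ^ ((-2 * r + 1 : ℝ) : ℂ)) (log ℂ) -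
    rescale (-x) (log ℂ) - rescale (-x⁻¹) (log ℂ)

theorem expPS_logΔps (x : ℂ) (r : ℝ) : expPS (logΔps x r) = Δps x r := by
  have h₀ : ∀ c : ℂ, constantCoeff (rescale (-c) (log ℂ)) = 0 := by simp
  rw [logΔps, sub_eq_add_neg, sub_eq_add_neg, expPS_add (by simp [h₀]) (by simp [h₀]),
    expPS_add (by simp [h₀]) (by simp [h₀]), expPS_add (h₀ _) (h₀ _), expPS_rescale_log,
    expPS_rescale_log, expPS_neg_rescale_log, expPS_neg_rescale_log, Δps]

theorem coeff_logΔps {x : ℂ} (hx₀ : x ≠ 0) (hc : x - x⁻¹ ≠ 0) (r : ℝ) {m : ℕ} (hm : m ≠ 0) :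
    coeff m (logΔps x r) =
      -(1 / (m : ℂ) * qnum x ((r - 1) * m) * qnum x (r * m) * (x - x⁻¹) ^ 2) := by
  set a := x ^ ((r * m : ℝ) : ℂ)
  have ha : a ≠ 0 := by simp [a, Complex.cpow_eq_zero_iff, hx₀]
  have hq : x ^ m ≠ 0 := pow_ne_zero m hx₀
  have h₁ : (x ^ ((2 * r - 1 : ℝ) : ℂ)) ^ m = a ^ 2 / x ^ m := by
    rw [← Complex.cpow_nat_mul, show (m : ℂ) * ((2 * r - 1 : ℝ) : ℂ) =
        ((2 : ℕ) : ℂ) * ((r * m : ℝ) : ℂ) - m by push_cast; ring,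
      Complex.cpow_sub _ _ hx₀, Complex.cpow_nat_mul, Complex.cpow_natCast]
  have h₂ : (x ^ ((-2 * r + 1 : ℝ) : ℂ)) ^ m = x ^ m / a ^ 2 := by
    rw [← Complex.cpow_nat_mul, show (m : ℂ) * ((-2 * r + 1 : ℝ) : ℂ) =
        m - ((2 : ℕ) : ℂ) * ((r * m : ℝ) : ℂ) by push_cast; ring,
      Complex.cpow_sub _ _ hx₀, Complex.cpow_nat_mul, Complex.cpow_natCast]
  have h₃ : qnum x ((r - 1) * m) = (a / x ^ m - x ^ m / a) / (x - x⁻¹) := by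
    rw [qnum, show (((r - 1) * m : ℝ) : ℂ) = ((r * m : ℝ) : ℂ) - m by push_cast; ring, neg_sub,
      Complex.cpow_sub _ _ hx₀, Complex.cpow_sub _ _ hx₀, Complex.cpow_natCast]
  have h₄ : qnum x (r * m) = (a - a⁻¹) / (x - x⁻¹) := by rw [qnum, Complex.cpow_neg]
  have h₅ : qnum x ((r - 1) * m) * qnum x (r * m) * (x - x⁻¹) ^ 2 =
      a ^ 2 / x ^ m - (x ^ m)⁻¹ - x ^ m + x ^ m / a ^ 2 := by
    rw [h₃, h₄, div_mul_div_comm, ← sq, div_mul_cancel₀ _ (pow_ne_zero 2 hc)]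
    field_simp
    ring
  simp only [logΔps, map_add, map_sub, coeff_rescale_neg_log _ hm, h₁, h₂, inv_pow]
  linear_combination (1 / (m : ℂ)) * h₅

theorem fpsLog_fusion {x : ℂ} (hx₀ : x ≠ 0) (hx : ‖x‖ ≠ 1) (r : ℝ) (N : ℕ) {i j : ℤ}
    (hi : 1 ≤ i) (hj : 1 ≤ j) :
    fpsLog x r N 1 i + rescale (x ^ (i + j)) (fpsLog x r N 1 j) =
      rescale (x ^ j) (fpsLog x r N 1 (i + j)) + rescale (x ^ i) (logΔps x r) := by
  ext m
  rcases eq_or_ne m 0 with rfl | hm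
  · simp [coeff_zero_eq_constantCoeff_apply, constantCoeff_fpsLog, logΔps]
  have hq₀ : x ^ m ≠ 0 := pow_ne_zero m hx₀
  have hD := fusionDiff_zero_ne_zero hq₀ (norm_pow_ne_one hx hm) N
  have hpow : ∀ k : ℤ, (x ^ k) ^ m = (x ^ m) ^ k := fun k => by
    rw [← zpow_natCast, ← zpow_mul, mul_comm, zpow_mul, zpow_natCast]
  simp only [map_add, coeff_rescale, coeff_fpsLog_one hx₀ hx r N hi hm,
    coeff_fpsLog_one hx₀ hx r N hj hm, coeff_fpsLog_one hx₀ hx r N (by omega : 1 ≤ i + j) hm,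
    coeff_logΔps hx₀ (sub_inv_ne_zero_of_norm_ne_one hx₀ hx) r hm, hpow]
  set P := 1 / (m : ℂ) * qnum x ((r - 1) * m) * qnum x (r * m) * (x - x⁻¹) ^ 2
  linear_combination (-P / fusionDiff (x ^ m) N 0) * fusionDiff_add hq₀ N i j -
    (x ^ m) ^ i * P * div_self hD

theorem fps_additive_fusion_general (x : ℂ) (hx0 : x ≠ 0) (hx1 : ‖x‖ < 1)
    (r : ℝ) (N : ℕ) (i j : ℤ) (hi : 1 ≤ i) (hj : 1 ≤ j) :
    fps x r N 1 i * PowerSeries.rescale (x ^ (i + j)) (fps x r N 1 j) =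
      PowerSeries.rescale (x ^ j) (fps x r N 1 (i + j)) *
        PowerSeries.rescale (x ^ i) (Δps x r) := by
  have h₀ : ∀ (a : ℂ) (k : ℤ), constantCoeff (rescale a (fpsLog x r N 1 k)) = 0 := by
    simp [constantCoeff_fpsLog]
  simp only [fps_eq_expPS_fpsLog, ← expPS_logΔps, rescale_expPS]
  rw [← expPS_add (constantCoeff_fpsLog x r N 1 i) (h₀ _ _),
    ← expPS_add (h₀ _ _) (by simp [logΔps]), fpsLog_fusion hx0 hx1.ne r N hi hj]

/-- `f_{1,i}(z)·f_{1,j}(x^{i+j} z) = f_{1,i+j}(x^{j} z)·Δ(x^{i} z)` for `i, j ≥ 1`. -/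
theorem fps_additive_fusion (x : ℂ) (hx0 : x ≠ 0) (hx1 : ‖x‖ < 1)
    (r : ℝ) (hr : 1 < r) (N : ℕ) (hN : 1 ≤ N) (i j : ℤ) (hi : 1 ≤ i) (hj : 1 ≤ j) :
    fps x r N 1 i * PowerSeries.rescale (x ^ (i + j)) (fps x r N 1 j) =
      PowerSeries.rescale (x ^ j) (fps x r N 1 (i + j)) *
        PowerSeries.rescale (x ^ i) (Δps x r) :=
  fps_additive_fusion_general x hx0 hx1 r N i j hi hj
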